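/- For the marginal sums, if C_x ∩ C_y ≠ ∅ then Cov(g°_{x(C_x)}, g°_{y(C_y)}) = 2^{−|C_x|/2 − |C_y|/2} ∑_{A ⊆ C_x ∩ C_y, A ≠ ∅} ∏_{j∈A}(-1)^{x[j]+y[j]} (1 + (α/(1-α))(1-ρ_A))^{-1}. -/

import Mathlib

/-! The `g_A` are orthonormal in `L²(μ)` (independent, centred, of unit variance), so the product
of two linear combinations of them integrates to the sum, over the common indices, of the products
of their coefficients; the two inverse square roots of each shared coefficient multiply to
`(1 + α/(1-α)(1-ρ_A))⁻¹`. -/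

open Finset MeasureTheory ProbabilityTheory

namespace ProbabilityTheory

section CenteredGaussian

variable {Ω : Type*} [MeasurableSpace Ω] {μ : Measure Ω} {X : Ω → ℝ} {v : NNReal}

lemma HasLaw.memLp_two_of_gaussianReal (hX : HasLaw X (gaussianReal 0 v) μ) : MemLp X 2 μ :=
  ((hX.map_eq ▸ memLp_id_gaussianReal 2 : MemLp id 2 (μ.map X))).comp_of_map hX.aemeasurable

lemma HasLaw.integral_eq_zero_of_gaussianReal (hX : HasLaw X (gaussianReal 0 v) μ) :
    ∫ ω, X ω ∂μ = 0 := by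
  rw [hX.integral_eq, integral_id_gaussianReal]

lemma HasLaw.integral_mul_self_of_gaussianReal (hX : HasLaw X (gaussianReal 0 v) μ) :
    ∫ ω, X ω * X ω ∂μ = v := by
  have h := hX.integral_comp (f := fun x => x * x) (by fun_prop)
  rw [Function.comp_def] at h
  rw [h, ← variance_id_gaussianReal (μ := 0) (v := v), variance_eq_integral aemeasurable_id]
  simp [sq, integral_id_gaussianReal]

end CenteredGaussian

section Orthonormal

variable {Ω ι : Type*} [MeasurableSpace Ω] {μ : Measure Ω} {g : ι → Ω → ℝ}

lemma iIndepFun.integral_mul_eq_ite [DecidableEq ι] (hindep : iIndepFun g μ)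
    (hmeas : ∀ i, AEStronglyMeasurable (g i) μ) (hmean : ∀ i, ∫ ω, g i ω ∂μ = 0)
    (hsq : ∀ i, ∫ ω, g i ω * g i ω ∂μ = 1) (i j : ι) :
    ∫ ω, g i ω * g j ω ∂μ = if i = j then 1 else 0 := by
  split_ifs with hij
  · subst hij; exact hsq i
  · rw [(hindep.indepFun hij).integral_fun_mul_eq_mul_integral (hmeas i) (hmeas j), hmean,
      zero_mul]

lemma integral_sum_mul_sum_of_orthonormal [DecidableEq ι] (hL2 : ∀ i, MemLp (g i) 2 μ)
    (horth : ∀ i j, ∫ ω, g i ω * g j ω ∂μ = if i = j then 1 else 0)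
    (s t : Finset ι) (a b : ι → ℝ) :
    ∫ ω, (∑ i ∈ s, a i * g i ω) * (∑ j ∈ t, b j * g j ω) ∂μ = ∑ i ∈ s ∩ t, a i * b i := by
  have hint : ∀ i j, Integrable (fun ω => a i * b j * (g i ω * g j ω)) μ :=
    fun i j => ((hL2 i).integrable_mul (hL2 j)).const_mul _
  calc ∫ ω, (∑ i ∈ s, a i * g i ω) * (∑ j ∈ t, b j * g j ω) ∂μ
      = ∫ ω, ∑ i ∈ s, ∑ j ∈ t, a i * b j * (g i ω * g j ω) ∂μ := by
        simp_rw [sum_mul_sum, mul_mul_mul_comm]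
    _ = ∑ i ∈ s, ∑ j ∈ t, a i * b j * ∫ ω, g i ω * g j ω ∂μ := by
        rw [integral_finsetSum _ fun i _ => integrable_finsetSum _ fun j _ => hint i j]
        refine sum_congr rfl fun i _ => ?_
        rw [integral_finsetSum _ fun j _ => hint i j]
        simp_rw [integral_const_mul]
    _ = ∑ i ∈ s ∩ t, a i * b i := by
        simp_rw [horth, mul_ite, mul_one, mul_zero, sum_ite_eq, sum_ite_mem]

end Orthonormal

end ProbabilityTheory

lemma Finset.filter_powerset_inter {α : Type*} [DecidableEq α] (p : Finset α → Prop)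
    [DecidablePred p] (s t : Finset α) :
    (s ∩ t).powerset.filter p = s.powerset.filter p ∩ t.powerset.filter p := by
  rw [← filter_inter_distrib]
  congr 1
  ext u
  simp only [mem_powerset, mem_inter, subset_inter_iff]

theorem centered_marginal_covariance_general
    (N : ℕ) (α : ℝ) (hα : α ∈ Set.Ioo (0 : ℝ) 1)
    (ρ : Finset (Fin N) → ℝ) (hρ : ∀ A, ρ A ∈ Set.Icc (-1 : ℝ) 1)
    {Ω : Type*} [MeasurableSpace Ω] (μ : Measure Ω)
    (g : Finset (Fin N) → Ω → ℝ)
    (hgmeas : ∀ A, Measurable (g A))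
    (hglaw : ∀ A, Measure.map (g A) μ = gaussianReal 0 1)
    (hgindep : iIndepFun g μ)
    (gm : (Fin N → ZMod 2) → Finset (Fin N) → Ω → ℝ)
    (hgm : ∀ x C ω, gm x C ω = (2 : ℝ) ^ (-((C.card : ℝ)) / 2) *
      ∑ A ∈ C.powerset.filter (· ≠ ∅),
        (∏ j ∈ A, (-1 : ℝ) ^ ((x j).val)) *
          (Real.sqrt (1 + (α / (1 - α)) * (1 - ρ A)))⁻¹ * g A ω)
    (x y : Fin N → ZMod 2) (Cx Cy : Finset (Fin N)) :
    ∫ ω, gm x Cx ω * gm y Cy ω ∂μ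
      = (2 : ℝ) ^ (-((Cx.card : ℝ)) / 2 - ((Cy.card : ℝ)) / 2) *
        ∑ A ∈ (Cx ∩ Cy).powerset.filter (· ≠ ∅),
          (∏ j ∈ A, (-1 : ℝ) ^ ((x j).val + (y j).val)) *
            (1 + (α / (1 - α)) * (1 - ρ A))⁻¹ := by
  have hlaw A : HasLaw (g A) (gaussianReal 0 1) μ := ⟨(hgmeas A).aemeasurable, hglaw A⟩
  have horth := hgindep.integral_mul_eq_ite (fun A => (hgmeas A).aestronglyMeasurable)
    (fun A => (hlaw A).integral_eq_zero_of_gaussianReal)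
    (fun A => by simpa using (hlaw A).integral_mul_self_of_gaussianReal)
  have hweight A : 0 ≤ 1 + α / (1 - α) * (1 - ρ A) := by
    have : 0 ≤ α / (1 - α) := div_nonneg hα.1.le (by linarith [hα.2])
    nlinarith [(hρ A).2]
  simp only [hgm, mul_mul_mul_comm ((2 : ℝ) ^ (-(#Cx : ℝ) / 2))]
  rw [integral_const_mul,
    integral_sum_mul_sum_of_orthonormal (fun A => (hlaw A).memLp_two_of_gaussianReal) horth,
    ← filter_powerset_inter, ← Real.rpow_add two_pos]
  congr 1
  · congr 1; ring
  refine sum_congr rfl fun A _ => ?_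
  rw [mul_mul_mul_comm, ← prod_mul_distrib, ← mul_inv, Real.mul_self_sqrt (hweight A)]
  simp_rw [pow_add]

/-- for the marginal sums
`g°_{x(C)} = 2^{-|C|/2} ∑_{∅≠A⊆C} ∏_{j∈A}(-1)^{x[j]} (1+(α/(1-α))(1-ρ_A))^{-1/2} g_A`,
if `C_x ∩ C_y ≠ ∅` then
`Cov(g°_{x(C_x)}, g°_{y(C_y)}) = 2^{-|C_x|/2-|C_y|/2} ∑_{∅≠A⊆C_x∩C_y}
∏_{j∈A}(-1)^{x[j]+y[j]} (1+(α/(1-α))(1-ρ_A))⁻¹`. -/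
theorem centered_marginal_covariance
    (N : ℕ) (hN : 0 < N) (α : ℝ) (hα : α ∈ Set.Ioo (0 : ℝ) 1)
    (ρ : Finset (Fin N) → ℝ) (hρ : ∀ A, ρ A ∈ Set.Icc (-1 : ℝ) 1)
    {Ω : Type*} [MeasurableSpace Ω] (μ : Measure Ω) [IsProbabilityMeasure μ]
    (g : Finset (Fin N) → Ω → ℝ)
    (hgmeas : ∀ A, Measurable (g A))
    (hglaw : ∀ A, Measure.map (g A) μ = gaussianReal 0 1)
    (hgindep : iIndepFun g μ)
    (gm : (Fin N → ZMod 2) → Finset (Fin N) → Ω → ℝ)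
    (hgm : ∀ x C ω, gm x C ω = (2 : ℝ) ^ (-((C.card : ℝ)) / 2) *
      ∑ A ∈ C.powerset.filter (· ≠ ∅),
        (∏ j ∈ A, (-1 : ℝ) ^ ((x j).val)) *
          (Real.sqrt (1 + (α / (1 - α)) * (1 - ρ A)))⁻¹ * g A ω)
    (x y : Fin N → ZMod 2) (Cx Cy : Finset (Fin N)) (hC : Cx ∩ Cy ≠ ∅) :
    ∫ ω, gm x Cx ω * gm y Cy ω ∂μ
      = (2 : ℝ) ^ (-((Cx.card : ℝ)) / 2 - ((Cy.card : ℝ)) / 2) *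
        ∑ A ∈ (Cx ∩ Cy).powerset.filter (· ≠ ∅),
          (∏ j ∈ A, (-1 : ℝ) ^ ((x j).val + (y j).val)) *
            (1 + (α / (1 - α)) * (1 - ρ A))⁻¹ :=
  centered_marginal_covariance_general N α hα ρ hρ μ g hgmeas hglaw hgindep gm hgm x y Cx Cy
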